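/- For the countable edgeless cube Q_L, no legal configuration outside S is connected to S by accessibility in either direction: if f ∈ S and g is a legal configuration with g ∉ S, then g is not accessible from f and f is not accessible from g. -/

import Mathlib

universe u v

namespace InfRubik

/-- The three axes of the cube. -/
inductive Axis : Type
  | x | y | z
  deriving DecidableEq

/-- The six colors of the Rubik's cube.  A *configuration* is a map from cells to
`Option Color`, where `none` plays the role of the non-color `NaC`. -/
inductive Color : Type
  | red | white | green | orange | yellow | blue
  deriving DecidableEq

/-- The set `L̄† = -L ∪ {0} ∪ L ∪ {±∞}` of extended coordinates. -/
inductive ExtCoord (L : Type u) : Type u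
  | neg : L → ExtCoord L
  | zero : ExtCoord L
  | pos : L → ExtCoord L
  | negInf : ExtCoord L
  | posInf : ExtCoord L

namespace ExtCoord

variable {L : Type u}

/-- The reflection `r ↦ -r`. -/
def reflect : ExtCoord L → ExtCoord L
  | .neg r => .pos r
  | .zero => .zero
  | .pos r => .neg r
  | .negInf => .posInf
  | .posInf => .negInf

@[simp] theorem reflect_reflect (a : ExtCoord L) : a.reflect.reflect = a := by
  cases a <;> rfl

/-- Whether a coordinate is `±∞`. -/
def isInfB : ExtCoord L → Bool
  | .negInf => true
  | .posInf => true
  | _ => false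

@[simp] theorem isInfB_reflect (a : ExtCoord L) : a.reflect.isInfB = a.isInfB := by
  cases a <;> rfl

/-- Whether a coordinate is `0`. -/
def isZeroB : ExtCoord L → Bool
  | .zero => true
  | _ => false

@[simp] theorem isZeroB_reflect (a : ExtCoord L) : a.reflect.isZeroB = a.isZeroB := by
  cases a <;> rfl

end ExtCoord

/-- A point of the ambient space `L̄† × L̄† × L̄†`. -/
abbrev Triple (L : Type u) := ExtCoord L × ExtCoord L × ExtCoord L

/-- The coordinate of a point along an axis. -/
def Triple.coord {L : Type u} : Axis → Triple L → ExtCoord L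
  | .x, p => p.1
  | .y, p => p.2.1
  | .z, p => p.2.2

/-- Quarter-turn rotation of the ambient space about an axis (right-hand rule). -/
def rot {L : Type u} : Axis → Triple L → Triple L
  | .x, p => (p.1, p.2.2.reflect, p.2.1)
  | .y, p => (p.2.2, p.2.1, p.1.reflect)
  | .z, p => (p.2.1.reflect, p.1, p.2.2)

/-- Inverse quarter-turn rotation of the ambient space about an axis. -/
def rotInv {L : Type u} : Axis → Triple L → Triple L
  | .x, p => (p.1, p.2.2, p.2.1.reflect)
  | .y, p => (p.2.2.reflect, p.2.1, p.1)
  | .z, p => (p.2.1, p.1.reflect, p.2.2)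

@[simp] theorem rotInv_rot {L : Type u} (i : Axis) (p : Triple L) : rotInv i (rot i p) = p := by
  cases i <;> simp [rot, rotInv]

@[simp] theorem rot_rotInv {L : Type u} (i : Axis) (p : Triple L) : rot i (rotInv i p) = p := by
  cases i <;> simp [rot, rotInv]

/-- The number of infinite coordinates of a point. -/
def infCount {L : Type u} (p : Triple L) : ℕ :=
  (if p.1.isInfB then 1 else 0) + (if p.2.1.isInfB then 1 else 0) +
    (if p.2.2.isInfB then 1 else 0)

/-- The number of zero coordinates of a point. -/
def zeroCount {L : Type u} (p : Triple L) : ℕ :=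
  (if p.1.isZeroB then 1 else 0) + (if p.2.1.isZeroB then 1 else 0) +
    (if p.2.2.isZeroB then 1 else 0)

theorem infCount_rot {L : Type u} (i : Axis) (p : Triple L) : infCount (rot i p) = infCount p := by
  cases i <;> rcases h1 : p.1.isInfB <;> rcases h2 : p.2.1.isInfB <;> rcases h3 : p.2.2.isInfB <;> simp [rot, infCount, h1, h2, h3]

theorem infCount_rotInv {L : Type u} (i : Axis) (p : Triple L) :
    infCount (rotInv i p) = infCount p := by
  cases i <;> rcases h1 : p.1.isInfB <;> rcases h2 : p.2.1.isInfB <;> rcases h3 : p.2.2.isInfB <;> simp [rotInv, infCount, h1, h2, h3]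

@[simp] theorem coord_rot_self {L : Type u} (i : Axis) (p : Triple L) :
    (rot i p).coord i = p.coord i := by
  cases i <;> rfl

@[simp] theorem coord_rotInv_self {L : Type u} (i : Axis) (p : Triple L) :
    (rotInv i p).coord i = p.coord i := by
  cases i <;> rfl

/-- A cell of the *edgeless* cube `Q_L`: a point of the ambient space with exactly one
infinite coordinate. -/
def Cell (L : Type u) : Type u := {p : Triple L // infCount p = 1}

open Classical in
/-- The underlying map on points of the quarter-turn twist `T_{i,α}`. -/
noncomputable def qtTriple {L : Type u} (i : Axis) (α : ExtCoord L) (p : Triple L) : Triple L :=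
  if p.coord i = α then rot i p else p

open Classical in
/-- The underlying map on points of the inverse quarter-turn twist `T_{i,α}⁻¹`. -/
noncomputable def qtTripleInv {L : Type u} (i : Axis) (α : ExtCoord L) (p : Triple L) : Triple L :=
  if p.coord i = α then rotInv i p else p

theorem qtTripleInv_qtTriple {L : Type u} (i : Axis) (α : ExtCoord L) (p : Triple L) :
    qtTripleInv i α (qtTriple i α p) = p := by
  classical
  by_cases h : p.coord i = α <;> simp [qtTriple, qtTripleInv, h]

theorem qtTriple_qtTripleInv {L : Type u} (i : Axis) (α : ExtCoord L) (p : Triple L) :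
    qtTriple i α (qtTripleInv i α p) = p := by
  classical
  by_cases h : p.coord i = α <;> simp [qtTriple, qtTripleInv, h]

theorem infCount_qtTriple {L : Type u} (i : Axis) (α : ExtCoord L) (p : Triple L) :
    infCount (qtTriple i α p) = infCount p := by
  classical
  by_cases h : p.coord i = α <;> simp [qtTriple, h, infCount_rot]

theorem infCount_qtTripleInv {L : Type u} (i : Axis) (α : ExtCoord L) (p : Triple L) :
    infCount (qtTripleInv i α p) = infCount p := by
  classical
  by_cases h : p.coord i = α <;> simp [qtTripleInv, h, infCount_rotInv]

/-- The quarter-turn twist `T_{i,α}` of the edgeless cube, as a permutation of cells. -/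
noncomputable def quarterTurn {L : Type u} (i : Axis) (α : ExtCoord L) : Equiv.Perm (Cell L) where
  toFun c := ⟨qtTriple i α c.1, by rw [infCount_qtTriple]; exact c.2⟩
  invFun c := ⟨qtTripleInv i α c.1, by rw [infCount_qtTripleInv]; exact c.2⟩
  left_inv c := Subtype.ext (qtTripleInv_qtTriple i α c.1)
  right_inv c := Subtype.ext (qtTriple_qtTripleInv i α c.1)

/-- The basic twists of the edgeless cube: quarter turns, half turns and reverse
quarter turns of a single layer. -/
def IsBasic (L : Type u) (π : Equiv.Perm (Cell L)) : Prop :=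
  ∃ (i : Axis) (α : ExtCoord L),
    π = quarterTurn i α ∨ π = quarterTurn i α ^ 2 ∨ π = (quarterTurn i α)⁻¹

/-! ### The edged cube -/

/-- How a quarter-turn about axis `i` transports the face tag of a cell. -/
def tagMap : Axis → Axis → Axis
  | .x, .x => .x
  | .x, .y => .z
  | .x, .z => .y
  | .y, .x => .z
  | .y, .y => .y
  | .y, .z => .x
  | .z, .x => .y
  | .z, .y => .x
  | .z, .z => .z

@[simp] theorem tagMap_tagMap (i j : Axis) : tagMap i (tagMap i j) = j := by
  cases i <;> cases j <;> rfl

theorem isInfB_coord_tagMap_rot {L : Type u} (i j : Axis) (p : Triple L) :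
    ((rot i p).coord (tagMap i j)).isInfB = (p.coord j).isInfB := by
  cases i <;> cases j <;> simp [rot, Triple.coord, tagMap]

theorem isInfB_coord_tagMap_rotInv {L : Type u} (i j : Axis) (p : Triple L) :
    ((rotInv i p).coord (tagMap i j)).isInfB = (p.coord j).isInfB := by
  cases i <;> cases j <;> simp [rotInv, Triple.coord, tagMap]

/-- A cell of the *edged* cube `Q̄_L`: a point of the ambient space together with a tag
naming an axis, such that the coordinate along the tagged axis is infinite (the tag
indicates the face to which the cell belongs). -/
def ECell (L : Type u) : Type u := {q : Triple L × Axis // (q.1.coord q.2).isInfB = true}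

open Classical in
/-- The underlying map of the quarter-turn twist `T_{i,α}` of the edged cube. -/
noncomputable def eqtFun {L : Type u} (i : Axis) (α : ExtCoord L) (q : Triple L × Axis) :
    Triple L × Axis :=
  if q.1.coord i = α then (rot i q.1, tagMap i q.2) else q

open Classical in
/-- The underlying map of the reverse quarter-turn twist of the edged cube. -/
noncomputable def eqtFunInv {L : Type u} (i : Axis) (α : ExtCoord L) (q : Triple L × Axis) :
    Triple L × Axis :=
  if q.1.coord i = α then (rotInv i q.1, tagMap i q.2) else q

theorem eqtFunInv_eqtFun {L : Type u} (i : Axis) (α : ExtCoord L) (q : Triple L × Axis) :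
    eqtFunInv i α (eqtFun i α q) = q := by
  classical
  by_cases h : q.1.coord i = α <;> simp [eqtFun, eqtFunInv, h]

theorem eqtFun_eqtFunInv {L : Type u} (i : Axis) (α : ExtCoord L) (q : Triple L × Axis) :
    eqtFun i α (eqtFunInv i α q) = q := by
  classical
  by_cases h : q.1.coord i = α <;> simp [eqtFun, eqtFunInv, h]

theorem isInfB_eqtFun {L : Type u} (i : Axis) (α : ExtCoord L) (q : Triple L × Axis) :
    (((eqtFun i α q).1.coord (eqtFun i α q).2)).isInfB = ((q.1.coord q.2)).isInfB := by
  classical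
  by_cases h : q.1.coord i = α <;> simp [eqtFun, h, isInfB_coord_tagMap_rot]

theorem isInfB_eqtFunInv {L : Type u} (i : Axis) (α : ExtCoord L) (q : Triple L × Axis) :
    (((eqtFunInv i α q).1.coord (eqtFunInv i α q).2)).isInfB = ((q.1.coord q.2)).isInfB := by
  classical
  by_cases h : q.1.coord i = α <;> simp [eqtFunInv, h, isInfB_coord_tagMap_rotInv]

/-- The quarter-turn twist `T_{i,α}` of the edged cube, as a permutation of cells.  A face
twist moves, besides the cells of its face, also the coupled edge and corner cells of the
adjacent faces lying in the twisted layer. -/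
noncomputable def equarterTurn {L : Type u} (i : Axis) (α : ExtCoord L) :
    Equiv.Perm (ECell L) where
  toFun c := ⟨eqtFun i α c.1, by rw [isInfB_eqtFun]; exact c.2⟩
  invFun c := ⟨eqtFunInv i α c.1, by rw [isInfB_eqtFunInv]; exact c.2⟩
  left_inv c := Subtype.ext (eqtFunInv_eqtFun i α c.1)
  right_inv c := Subtype.ext (eqtFun_eqtFunInv i α c.1)

/-- The basic twists of the edged cube. -/
def IsEBasic (L : Type u) (π : Equiv.Perm (ECell L)) : Prop :=
  ∃ (i : Axis) (α : ExtCoord L),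
    π = equarterTurn i α ∨ π = equarterTurn i α ^ 2 ∨ π = (equarterTurn i α)⁻¹

/-! ### Transfinite sequences of twists and their action on labellings -/

open Classical in
/-- The eventual value of an ordinal-indexed family of `Option`-values: `some v` if the family
stabilizes on `some v` before `lam`, and `none` otherwise. -/
noncomputable def eventualVal {X : Type u} (lam : Ordinal.{v})
    (g : ∀ η, η < lam → Option X) : Option X :=
  if h : ∃ v : X, ∃ γ, γ < lam ∧ ∀ η (hη : η < lam), γ ≤ η → g η hη = some v
  then some h.choose else none

/-- Applying an ordinal-indexed sequence of permutations to an initial labelling: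
`run σ f0 θ` is the labelling obtained after the first `θ` moves, with
`f_{η+1}(c) = f_η(σ_η⁻¹ c)` at successors and the eventual value (or `NaC = none`)
at limits. -/
noncomputable def run {Cl : Type v} {X : Type u} (σ : Ordinal.{v} → Equiv.Perm Cl)
    (f0 : Cl → Option X) (θ : Ordinal.{v}) : Cl → Option X :=
  Ordinal.limitRecOn (motive := fun _ => Cl → Option X) θ f0
    (fun η fη c => fη ((σ η)⁻¹ c))
    (fun lam _ prev c => eventualVal lam (fun η h => prev η h c))

/-- A (transfinite) sequence of twists of length `len`, each of which satisfies the
predicate `B` (being a basic twist). -/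
structure TwistSeq (Cl : Type v) (B : Equiv.Perm Cl → Prop) : Type (v + 1) where
  len : Ordinal.{v}
  seq : Ordinal.{v} → Equiv.Perm Cl
  basic : ∀ η, η < len → B (seq η)

namespace TwistSeq

variable {Cl : Type v} {B : Equiv.Perm Cl → Prop}

/-- The terminal labelling obtained by applying a sequence of twists to `f0`. -/
noncomputable def terminal (s : TwistSeq Cl B) {X : Type u} (f0 : Cl → Option X) :
    Cl → Option X :=
  run s.seq f0 s.len

/-- A sequence of twists is convergent over `f0` if the terminal labelling is legal,
i.e. never takes the value `NaC = none`. -/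
def ConvOver (s : TwistSeq Cl B) {X : Type u} (f0 : Cl → Option X) : Prop :=
  ∀ c, s.terminal f0 c ≠ none

/-- A sequence of twists is universally convergent if it is convergent over the identity
labelling. -/
def UnivConv (s : TwistSeq Cl B) : Prop := s.ConvOver (fun c => some c)

/-- A sequence is twist-finite if each twist occurs in it only finitely many times. -/
def TwistFinite (s : TwistSeq Cl B) : Prop :=
  ∀ π : Equiv.Perm Cl, {η : Ordinal | η < s.len ∧ s.seq η = π}.Finite

/-- Two sequences are equivalent, `σ⃗ ∼ τ⃗`, when they produce the same terminal
configuration over every initial configuration. -/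
def Sim (s t : TwistSeq Cl B) : Prop :=
  ∀ f : Cl → Option Color, s.terminal f = t.terminal f

/-- Concatenation of twist sequences: `s.concat t` performs `s` and then `t`. -/
noncomputable def concat (s t : TwistSeq Cl B) : TwistSeq Cl B where
  len := s.len + t.len
  seq := fun η => if η < s.len then s.seq η else t.seq (η - s.len)
  basic := by
    intro η hη
    by_cases h : η < s.len
    · simpa [h] using s.basic η h
    · have hc : 0 < t.len := by
        rcases eq_zero_or_pos t.len with h0 | h0
        · rw [h0, add_zero] at hη; exact absurd hη h
        · exact h0
      have h2 : η - s.len < t.len := Ordinal.sub_lt_of_lt_add hη hc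
      simpa [h] using t.basic _ h2

/-- The empty sequence of twists. -/
def empty (Cl : Type v) (B : Equiv.Perm Cl → Prop) : TwistSeq Cl B where
  len := 0
  seq := fun _ => 1
  basic := fun η hη => absurd hη (by simp)

/-- `n`-fold self-concatenation of a sequence of twists. -/
noncomputable def npow (s : TwistSeq Cl B) : ℕ → TwistSeq Cl B
  | 0 => empty Cl B
  | n + 1 => (npow s n).concat s

end TwistSeq

/-- Basic sequences of twists of the edgeless cube `Q_L`. -/
abbrev BasicSeq (L : Type u) := TwistSeq (Cell L) (IsBasic L)

/-- Basic sequences of twists of the edged cube `Q̄_L`. -/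
abbrev EBasicSeq (L : Type u) := TwistSeq (ECell L) (IsEBasic L)

/-- `f` is accessible from `f0` when some basic sequence applied to `f0` is convergent with
terminal configuration `f`. -/
def Accessible {Cl : Type v} (B : Equiv.Perm Cl → Prop) (f0 f : Cl → Option Color) : Prop :=
  ∃ s : TwistSeq Cl B, s.ConvOver f0 ∧ s.terminal f0 = f

/-- A labelling is legal if it never takes the value `NaC = none`. -/
def IsLegal {Cl : Type v} {X : Type u} (f : Cl → Option X) : Prop := ∀ c, f c ≠ none

/-! ### Clusters, faces, and distinguished configurations -/

/-- The group of permutations of cells of the edgeless cube generated by the basic twists. -/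
def twistGroup (L : Type u) : Subgroup (Equiv.Perm (Cell L)) :=
  Subgroup.closure {π | IsBasic L π}

/-- The cluster of a cell of the edgeless cube: its orbit under the group generated by the
basic twists. -/
def cluster {L : Type u} (c : Cell L) : Set (Cell L) :=
  {d | ∃ g ∈ twistGroup L, g c = d}

/-- The group of permutations of cells of the edged cube generated by the basic twists. -/
def etwistGroup (L : Type u) : Subgroup (Equiv.Perm (ECell L)) :=
  Subgroup.closure {π | IsEBasic L π}

/-- The cluster of a cell of the edged cube. -/
def ecluster {L : Type u} (c : ECell L) : Set (ECell L) :=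
  {d | ∃ g ∈ etwistGroup L, g c = d}

open Classical in
/-- The solved configuration of the edgeless cube: each face gets one of six distinct
colors. -/
noncomputable def fSolved (L : Type u) : Cell L → Option Color := fun c =>
  if c.1.1 = ExtCoord.posInf then some .red
  else if c.1.1 = ExtCoord.negInf then some .orange
  else if c.1.2.1 = ExtCoord.posInf then some .blue
  else if c.1.2.1 = ExtCoord.negInf then some .green
  else if c.1.2.2 = ExtCoord.posInf then some .white
  else some .yellow

/-- The color of each face: the face is named by the axis and the sign (`true` = `+∞`). -/
def faceColor : Axis → Bool → Color
  | .x, true => .red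
  | .x, false => .orange
  | .y, true => .blue
  | .y, false => .green
  | .z, true => .white
  | .z, false => .yellow

open Classical in
/-- The solved configuration of the edged cube. -/
noncomputable def efSolved (L : Type u) : ECell L → Option Color := fun c =>
  if c.1.1.coord c.1.2 = ExtCoord.posInf then some (faceColor c.1.2 true)
  else some (faceColor c.1.2 false)

/-- A center cell of the edgeless cube: two of its coordinates are `0`. -/
def IsCenter {L : Type u} (c : Cell L) : Prop := zeroCount c.1 = 2

/-- The global rotation of the whole cube about an axis, as a permutation of the cells of
the edgeless cube. -/
def rotAllPerm {L : Type u} (i : Axis) : Equiv.Perm (Cell L) where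
  toFun c := ⟨rot i c.1, by rw [infCount_rot]; exact c.2⟩
  invFun c := ⟨rotInv i c.1, by rw [infCount_rotInv]; exact c.2⟩
  left_inv c := Subtype.ext (rotInv_rot i c.1)
  right_inv c := Subtype.ext (rot_rotInv i c.1)

/-- The group of global rotations of the edgeless cube. -/
def rotGroup (L : Type u) : Subgroup (Equiv.Perm (Cell L)) :=
  Subgroup.closure (Set.range (rotAllPerm (L := L)))

/-- A configuration of the edgeless cube is standard if every non-center cluster contains
exactly four cells of each of the six colors, and its restriction to the center cluster is
obtained from the solved configuration by a global rotation of the cube. -/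
def Standard {L : Type u} (f : Cell L → Option Color) : Prop :=
  (∀ c : Cell L, ¬IsCenter c → ∀ γ : Color, {d ∈ cluster c | f d = some γ}.ncard = 4) ∧
  ∃ g ∈ rotGroup L, ∀ d : Cell L, IsCenter d → f d = fSolved L (g⁻¹ d)

/-- A configuration is invariant under all quarter-turn face twists. -/
def FaceInvariant {L : Type u} (f : Cell L → Option Color) : Prop :=
  ∀ (i : Axis) (α : ExtCoord L), α.isInfB = true →
    ∀ c : Cell L, f ((quarterTurn i α)⁻¹ c) = f c

/-! ### Quadrants and cluster configurations -/

/-- The upper-right quadrant `D` of the Front face: the cells `(x, y, +∞)` with `x ∈ L`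
and `y ∈ {0} ∪ L`; every non-center cluster has a unique representative in `D`. -/
def Dset (L : Type u) : Set (Cell L) :=
  {c | ∃ (a : L) (b : ExtCoord L), (b = ExtCoord.zero ∨ ∃ r : L, b = ExtCoord.pos r) ∧
    c.1 = (ExtCoord.pos a, b, ExtCoord.posInf)}

/-- Two cells lie in the same face quadrant (an image of `D` under a global rotation). -/
def SameQuadrant {L : Type u} (d d' : Cell L) : Prop :=
  ∃ g ∈ rotGroup L, d ∈ (fun c => g c) '' Dset L ∧ d' ∈ (fun c => g c) '' Dset L

/-! ### Coupled cells of the edged cube -/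

/-- Two cells of the edged cube are coupled if they occupy the same location but belong to
different faces (they are parts of a common edge or corner cubie). -/
def Coupled {L : Type u} (c c' : ECell L) : Prop := c.1.1 = c'.1.1 ∧ c.1.2 ≠ c'.1.2

/-- An edge cell: exactly two infinite coordinates. -/
def IsEdgeCell {L : Type u} (c : ECell L) : Prop := infCount c.1.1 = 2

/-- A corner cell: three infinite coordinates. -/
def IsCornerCell {L : Type u} (c : ECell L) : Prop := infCount c.1.1 = 3

/-- An edge-cross cell: an edge cell one of whose coordinates is `0`. -/
def IsEdgeCross {L : Type u} (c : ECell L) : Prop :=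
  IsEdgeCell c ∧ 0 < zeroCount c.1.1

end InfRubik
namespace InfRubik

variable {L : Type u}

/-! #### Equations for `run` -/

theorem run_zero {Cl : Type v} {X : Type u} (σ : Ordinal.{v} → Equiv.Perm Cl)
    (f0 : Cl → Option X) : run σ f0 0 = f0 := by
  unfold run
  rw [Ordinal.limitRecOn_zero]

theorem run_succ {Cl : Type v} {X : Type u} (σ : Ordinal.{v} → Equiv.Perm Cl)
    (f0 : Cl → Option X) (η : Ordinal.{v}) (c : Cl) :
    run σ f0 (Order.succ η) c = run σ f0 η ((σ η)⁻¹ c) := by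
  unfold run
  rw [Ordinal.limitRecOn_succ]

theorem run_limit {Cl : Type v} {X : Type u} (σ : Ordinal.{v} → Equiv.Perm Cl)
    (f0 : Cl → Option X) {lam : Ordinal.{v}} (hlam : Order.IsSuccLimit lam) (c : Cl) :
    run σ f0 lam c = eventualVal lam (fun η _ => run σ f0 η c) := by
  unfold run
  rw [Ordinal.limitRecOn_limit _ _ _ _ hlam]

/-! #### `eventualVal` lemmas -/

theorem eventualVal_eq_some {X : Type u} {lam : Ordinal.{v}} {g : ∀ η, η < lam → Option X}
    {v : X} {γ : Ordinal.{v}} (hγ : γ < lam)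
    (hs : ∀ η (hη : η < lam), γ ≤ η → g η hη = some v) :
    eventualVal lam g = some v := by
  have hex : ∃ w : X, ∃ δ, δ < lam ∧ ∀ η (hη : η < lam), δ ≤ η → g η hη = some w :=
    ⟨v, γ, hγ, hs⟩
  rw [eventualVal, dif_pos hex]
  obtain ⟨δ, hδ, hs'⟩ := hex.choose_spec
  have h1 := hs' (max γ δ) (max_lt hγ hδ) (le_max_right _ _)
  have h2 := hs (max γ δ) (max_lt hγ hδ) (le_max_left _ _)
  rw [h1] at h2
  exact h2

theorem exists_of_eventualVal_ne_none {X : Type u} {lam : Ordinal.{v}}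
    {g : ∀ η, η < lam → Option X} (h : eventualVal lam g ≠ none) :
    ∃ v : X, ∃ γ, γ < lam ∧ (∀ η (hη : η < lam), γ ≤ η → g η hη = some v) ∧
      eventualVal lam g = some v := by
  by_cases hex : ∃ v : X, ∃ γ, γ < lam ∧ ∀ η (hη : η < lam), γ ≤ η → g η hη = some v
  · obtain ⟨v, γ, hγ, hs⟩ := hex
    exact ⟨v, γ, hγ, hs, eventualVal_eq_some hγ hs⟩
  · rw [eventualVal, dif_neg hex] at h
    exact absurd rfl h

/-! #### Stabilization below a limit on a finite set of cells -/

theorem limit_stab {Cl : Type v} {X : Type u} (σ : Ordinal.{v} → Equiv.Perm Cl)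
    (f0 : Cl → Option X) {lam : Ordinal.{v}} (hlim : Order.IsSuccLimit lam)
    (S : Set Cl) (hfin : S.Finite)
    (hne : ∀ d ∈ S, run σ f0 lam d ≠ none) :
    ∃ Γ, Γ < lam ∧ ∀ η, Γ ≤ η → η < lam → ∀ d ∈ S, run σ f0 η d = run σ f0 lam d := by
  have key : ∀ d : Cl, ∃ γ, γ < lam ∧ (d ∈ S → ∀ η, γ ≤ η → η < lam →
      run σ f0 η d = run σ f0 lam d) := by
    intro d
    by_cases hd : d ∈ S
    · have h1 : run σ f0 lam d = eventualVal lam (fun η _ => run σ f0 η d) :=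
        run_limit σ f0 hlim d
      have h2 := hne d hd
      rw [h1] at h2
      obtain ⟨v, γ, hγ, hs, hev⟩ := exists_of_eventualVal_ne_none h2
      exact ⟨γ, hγ, fun _ η hγη hη => by rw [hs η hη hγη, h1, hev]⟩
    · exact ⟨0, hlim.pos, fun h => absurd h hd⟩
  choose γf hγf hst using key
  refine ⟨hfin.toFinset.sup γf, ?_, ?_⟩
  · exact (Finset.sup_lt_iff (show (⊥ : Ordinal) < lam from hlim.pos)).mpr
      (fun d _ => hγf d)
  · intro η hΓη hη d hd
    exact hst d hd η (le_trans (Finset.le_sup (hfin.mem_toFinset.mpr hd)) hΓη) hη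

/-! #### Persistence of `NaC` on a finite invariant set -/

theorem persist {Cl : Type v} {X : Type u} (σ : Ordinal.{v} → Equiv.Perm Cl)
    (f0 : Cl → Option X) (len : Ordinal.{v}) (S : Set Cl) (hfin : S.Finite)
    (hinv : ∀ η, η < len → ∀ d ∈ S, σ η d ∈ S ∧ (σ η)⁻¹ d ∈ S)
    {θ₀ : Ordinal.{v}} (hnone : ∃ d ∈ S, run σ f0 θ₀ d = none) :
    ∀ θ, θ₀ ≤ θ → θ ≤ len → ∃ d ∈ S, run σ f0 θ d = none := by
  intro θ
  induction θ using Ordinal.induction with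
  | h θ IH =>
    intro h0 hθ
    rcases eq_or_lt_of_le h0 with rfl | hlt
    · exact hnone
    rcases Ordinal.zero_or_succ_or_isSuccLimit θ with rfl | ⟨η, rfl⟩ | hlim
    · exact absurd hlt not_lt_zero
    · have hη : η < Order.succ η := Order.lt_succ η
      have hηlen : η < len := lt_of_lt_of_le hη hθ
      obtain ⟨d, hdS, hd⟩ := IH η hη (Order.lt_succ_iff.mp hlt) hηlen.le
      refine ⟨σ η d, (hinv η hηlen d hdS).1, ?_⟩
      rw [run_succ, Equiv.Perm.inv_def, Equiv.symm_apply_apply]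
      exact hd
    · by_contra hno
      push_neg at hno
      obtain ⟨Γ, hΓ, hst⟩ := limit_stab σ f0 hlim S hfin hno
      have hηθ : max θ₀ Γ < θ := max_lt hlt hΓ
      obtain ⟨d, hdS, hd⟩ := IH (max θ₀ Γ) hηθ (le_max_left _ _)
        (le_of_lt (lt_of_lt_of_le hηθ hθ))
      have h2 := hst (max θ₀ Γ) (le_max_right _ _) hηθ d hdS
      rw [hd] at h2
      exact hno d hdS h2.symm

/-! #### Invariance of per-cluster color counts -/

theorem count_inv {Cl : Type v} (σ : Ordinal.{v} → Equiv.Perm Cl) (f0 : Cl → Option Color)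
    (len : Ordinal.{v}) (S : Set Cl) (hfin : S.Finite)
    (hinv : ∀ η, η < len → ∀ d ∈ S, σ η d ∈ S ∧ (σ η)⁻¹ d ∈ S)
    (hleg : ∀ θ, θ ≤ len → ∀ d ∈ S, run σ f0 θ d ≠ none) :
    ∀ θ, θ ≤ len → ∀ v : Color,
      {d ∈ S | run σ f0 θ d = some v}.ncard = {d ∈ S | f0 d = some v}.ncard := by
  intro θ
  induction θ using Ordinal.induction with
  | h θ IH =>
    intro hθ v
    rcases Ordinal.zero_or_succ_or_isSuccLimit θ with rfl | ⟨η, rfl⟩ | hlim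
    · rw [run_zero]
    · have hηlen : η < len := lt_of_lt_of_le (Order.lt_succ η) hθ
      have heq : {d ∈ S | run σ f0 (Order.succ η) d = some v}
          = (σ η) '' {d ∈ S | run σ f0 η d = some v} := by
        ext d'
        constructor
        · rintro ⟨hd'S, hval⟩
          rw [run_succ] at hval
          exact ⟨(σ η)⁻¹ d', ⟨(hinv η hηlen d' hd'S).2, hval⟩, Equiv.apply_symm_apply _ _⟩
        · rintro ⟨d, ⟨hdS, hval⟩, rfl⟩
          refine ⟨(hinv η hηlen d hdS).1, ?_⟩
          rw [run_succ, Equiv.Perm.inv_def, Equiv.symm_apply_apply]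
          exact hval
      rw [heq, Set.ncard_image_of_injective _ (Equiv.injective _)]
      exact IH η (Order.lt_succ η) hηlen.le v
    · obtain ⟨Γ, hΓ, hst⟩ := limit_stab σ f0 hlim S hfin (hleg θ hθ)
      have heq : {d ∈ S | run σ f0 θ d = some v} = {d ∈ S | run σ f0 Γ d = some v} := by
        ext d
        exact and_congr_right fun hd => by rw [hst Γ le_rfl hΓ d hd]
      rw [heq]
      exact IH Γ hΓ (le_of_lt (lt_of_lt_of_le hΓ hθ)) v

end InfRubik
namespace InfRubik

variable {L : Type u}

/-! #### Finiteness of clusters -/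

/-- A set of coordinates closed under reflection. -/
def ReflClosed (A : Set (ExtCoord L)) : Prop := ∀ a ∈ A, a.reflect ∈ A

/-- Points all of whose coordinates lie in `A`. -/
def PSet (A : Set (ExtCoord L)) : Set (Triple L) := {p | p.1 ∈ A ∧ p.2.1 ∈ A ∧ p.2.2 ∈ A}

theorem rot_mem_PSet {A : Set (ExtCoord L)} (hA : ReflClosed A) (i : Axis) {p : Triple L}
    (hp : p ∈ PSet A) : rot i p ∈ PSet A := by
  obtain ⟨h1, h2, h3⟩ := hp
  cases i
  · exact ⟨h1, hA _ h3, h2⟩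
  · exact ⟨h3, h2, hA _ h1⟩
  · exact ⟨hA _ h2, h1, h3⟩

theorem rotInv_mem_PSet {A : Set (ExtCoord L)} (hA : ReflClosed A) (i : Axis) {p : Triple L}
    (hp : p ∈ PSet A) : rotInv i p ∈ PSet A := by
  obtain ⟨h1, h2, h3⟩ := hp
  cases i
  · exact ⟨h1, h3, hA _ h2⟩
  · exact ⟨hA _ h3, h2, h1⟩
  · exact ⟨h2, hA _ h1, h3⟩

theorem qtTriple_mem_PSet {A : Set (ExtCoord L)} (hA : ReflClosed A) (i : Axis)
    (α : ExtCoord L) {p : Triple L} (hp : p ∈ PSet A) : qtTriple i α p ∈ PSet A := by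
  unfold qtTriple
  split
  · exact rot_mem_PSet hA i hp
  · exact hp

theorem qtTripleInv_mem_PSet {A : Set (ExtCoord L)} (hA : ReflClosed A) (i : Axis)
    (α : ExtCoord L) {p : Triple L} (hp : p ∈ PSet A) : qtTripleInv i α p ∈ PSet A := by
  unfold qtTripleInv
  split
  · exact rotInv_mem_PSet hA i hp
  · exact hp

@[simp] theorem quarterTurn_apply_coe (i : Axis) (α : ExtCoord L) (c : Cell L) :
    (quarterTurn i α c).1 = qtTriple i α c.1 := rfl

@[simp] theorem quarterTurn_inv_apply_coe (i : Axis) (α : ExtCoord L) (c : Cell L) :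
    ((quarterTurn i α)⁻¹ c).1 = qtTripleInv i α c.1 := rfl

theorem twistGroup_mem_PSet {A : Set (ExtCoord L)} (hA : ReflClosed A)
    {g : Equiv.Perm (Cell L)} (hg : g ∈ twistGroup L) :
    ∀ c : Cell L, c.1 ∈ PSet A → (g c).1 ∈ PSet A ∧ (g⁻¹ c).1 ∈ PSet A := by
  refine Subgroup.closure_induction ?_ ?_ ?_ ?_ hg
  · rintro x ⟨i, α, hcase⟩ c hc
    have hqt : ∀ c : Cell L, c.1 ∈ PSet A →
        (quarterTurn i α c).1 ∈ PSet A ∧ ((quarterTurn i α)⁻¹ c).1 ∈ PSet A := by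
      intro c hc
      exact ⟨qtTriple_mem_PSet hA i α hc, qtTripleInv_mem_PSet hA i α hc⟩
    rcases hcase with rfl | rfl | rfl
    · exact hqt c hc
    · constructor
      · have h1 : (quarterTurn i α ^ 2) c = quarterTurn i α (quarterTurn i α c) := by
          rw [pow_two]; rfl
        rw [h1]
        exact (hqt _ (hqt c hc).1).1
      · have h1 : (quarterTurn i α ^ 2)⁻¹ c =
            (quarterTurn i α)⁻¹ ((quarterTurn i α)⁻¹ c) := by
          rw [pow_two, mul_inv_rev]; rfl
        rw [h1]
        exact (hqt _ (hqt c hc).2).2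
    · refine ⟨(hqt c hc).2, ?_⟩
      rw [inv_inv]
      exact (hqt c hc).1
  · intro c hc
    exact ⟨hc, hc⟩
  · intro x y hx hy px py c hc
    refine ⟨(px (y c) (py c hc).1).1, ?_⟩
    have h1 : (x * y)⁻¹ c = y⁻¹ (x⁻¹ c) := by rw [mul_inv_rev]; rfl
    rw [h1]
    exact (py _ (px c hc).2).2
  · intro x hx px c hc
    refine ⟨(px c hc).2, ?_⟩
    rw [inv_inv]
    exact (px c hc).1

theorem PSet_finite {A : Set (ExtCoord L)} (hA : A.Finite) : (PSet A).Finite := by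
  have h1 : PSet A = A ×ˢ (A ×ˢ A) := by
    ext p
    simp [PSet, Set.mem_prod]
  rw [h1]
  exact hA.prod (hA.prod hA)

theorem cell_PSet_finite {A : Set (ExtCoord L)} (hA : A.Finite) :
    {d : Cell L | d.1 ∈ PSet A}.Finite := by
  have h1 : {d : Cell L | d.1 ∈ PSet A} = Subtype.val ⁻¹' (PSet A) := rfl
  rw [h1]
  exact (PSet_finite hA).preimage (Subtype.val_injective.injOn)

theorem cluster_finite (c : Cell L) : (cluster c).Finite := by
  set A : Set (ExtCoord L) :=
    {c.1.1, c.1.1.reflect, c.1.2.1, c.1.2.1.reflect, c.1.2.2, c.1.2.2.reflect} with hAdef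
  have hA : ReflClosed A := by
    intro a ha
    simp only [hAdef, Set.mem_insert_iff, Set.mem_singleton_iff] at ha ⊢
    rcases ha with rfl|rfl|rfl|rfl|rfl|rfl <;> simp [ExtCoord.reflect_reflect]
  have hAfin : A.Finite := by
    rw [hAdef]
    exact (((((Set.finite_singleton _).insert _).insert _).insert _).insert _).insert _
  have hc0 : c.1 ∈ PSet A := by
    refine ⟨?_, ?_, ?_⟩ <;> simp [hAdef]
  have hsub : cluster c ⊆ {d : Cell L | d.1 ∈ PSet A} := by
    rintro d ⟨g, hg, rfl⟩
    exact (twistGroup_mem_PSet hA hg c hc0).1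
  exact (cell_PSet_finite hAfin).subset hsub

/-! #### Invariance of clusters -/

theorem basic_mem_twistGroup {π : Equiv.Perm (Cell L)} (h : IsBasic L π) :
    π ∈ twistGroup L :=
  Subgroup.subset_closure h

theorem mem_cluster_self (c : Cell L) : c ∈ cluster c := ⟨1, one_mem _, rfl⟩

theorem cluster_inv {c : Cell L} {g : Equiv.Perm (Cell L)} (hg : g ∈ twistGroup L)
    {d : Cell L} (hd : d ∈ cluster c) : g d ∈ cluster c ∧ g⁻¹ d ∈ cluster c := by
  obtain ⟨g0, hg0, rfl⟩ := hd
  exact ⟨⟨g * g0, mul_mem hg hg0, rfl⟩, ⟨g⁻¹ * g0, mul_mem (inv_mem hg) hg0, rfl⟩⟩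

/-! #### Legality at every stage -/

theorem legal_stages (s : BasicSeq L) (f0 : Cell L → Option Color) (hconv : s.ConvOver f0) :
    ∀ θ, θ ≤ s.len → ∀ c : Cell L, run s.seq f0 θ c ≠ none := by
  intro θ hθ c hc
  have hinv : ∀ η, η < s.len → ∀ d ∈ cluster c,
      s.seq η d ∈ cluster c ∧ (s.seq η)⁻¹ d ∈ cluster c :=
    fun η hη d hd => cluster_inv (basic_mem_twistGroup (s.basic η hη)) hd
  obtain ⟨d, _, hd⟩ := persist s.seq f0 s.len (cluster c) (cluster_finite c) hinv
    ⟨c, mem_cluster_self c, hc⟩ s.len hθ le_rfl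
  exact hconv d hd

theorem terminal_count (s : BasicSeq L) (f0 : Cell L → Option Color) (hconv : s.ConvOver f0)
    (c : Cell L) (v : Color) :
    {d ∈ cluster c | s.terminal f0 d = some v}.ncard
      = {d ∈ cluster c | f0 d = some v}.ncard := by
  have hinv : ∀ η, η < s.len → ∀ d ∈ cluster c,
      s.seq η d ∈ cluster c ∧ (s.seq η)⁻¹ d ∈ cluster c :=
    fun η hη d hd => cluster_inv (basic_mem_twistGroup (s.basic η hη)) hd
  have hleg : ∀ θ, θ ≤ s.len → ∀ d ∈ cluster c, run s.seq f0 θ d ≠ none :=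
    fun θ hθ d _ => legal_stages s f0 hconv θ hθ d
  exact count_inv s.seq f0 s.len (cluster c) (cluster_finite c) hinv hleg s.len le_rfl v

end InfRubik
namespace InfRubik

variable {L : Type u}

/-! #### Rotations preserve the center cluster -/

theorem zeroCount_rot (i : Axis) (p : Triple L) : zeroCount (rot i p) = zeroCount p := by
  cases i <;> rcases h1 : p.1.isZeroB <;> rcases h2 : p.2.1.isZeroB <;> rcases h3 : p.2.2.isZeroB <;> simp [rot, zeroCount, h1, h2, h3]

theorem zeroCount_rotInv (i : Axis) (p : Triple L) : zeroCount (rotInv i p) = zeroCount p := by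
  cases i <;> rcases h1 : p.1.isZeroB <;> rcases h2 : p.2.1.isZeroB <;> rcases h3 : p.2.2.isZeroB <;> simp [rotInv, zeroCount, h1, h2, h3]

@[simp] theorem rotAllPerm_apply_coe (i : Axis) (c : Cell L) :
    (rotAllPerm i c).1 = rot i c.1 := rfl

@[simp] theorem rotAllPerm_inv_apply_coe (i : Axis) (c : Cell L) :
    ((rotAllPerm i)⁻¹ c).1 = rotInv i c.1 := rfl

theorem rotGroup_center {g : Equiv.Perm (Cell L)} (hg : g ∈ rotGroup L) :
    ∀ d : Cell L, IsCenter d → IsCenter (g d) ∧ IsCenter (g⁻¹ d) := by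
  refine Subgroup.closure_induction ?_ ?_ ?_ ?_ hg
  · rintro x ⟨i, rfl⟩ d hd
    constructor
    · show zeroCount (rot i d.1) = 2
      rw [zeroCount_rot]; exact hd
    · show zeroCount (rotInv i d.1) = 2
      rw [zeroCount_rotInv]; exact hd
  · intro d hd
    exact ⟨hd, by simpa using hd⟩
  · intro x y hx hy px py d hd
    refine ⟨(px (y d) (py d hd).1).1, ?_⟩
    have h1 : (x * y)⁻¹ d = y⁻¹ (x⁻¹ d) := by rw [mul_inv_rev]; rfl
    rw [h1]
    exact (py _ (px d hd).2).2
  · intro x hx px d hd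
    refine ⟨(px d hd).2, ?_⟩
    rw [inv_inv]
    exact (px d hd).1

/-! #### Structure of center cells -/

theorem isZeroB_eq_zero {x : ExtCoord L} (h : x.isZeroB = true) : x = ExtCoord.zero := by
  cases x <;> simp_all [ExtCoord.isZeroB]

theorem zeroInf_indicator_le (x : ExtCoord L) :
    (if x.isZeroB then 1 else 0) + (if x.isInfB then 1 else 0) ≤ 1 := by
  cases x <;> simp [ExtCoord.isZeroB, ExtCoord.isInfB]

theorem isZeroB_of_ne_false {x : ExtCoord L} (h : x ≠ ExtCoord.zero) : x.isZeroB = false := by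
  cases x <;> simp_all [ExtCoord.isZeroB]

/-- A center cell whose coordinate along `i` is not `0` is fixed by the rotation about `i`. -/
theorem center_fix (d : Cell L) (hd : IsCenter d) (i : Axis)
    (hne : d.1.coord i ≠ ExtCoord.zero) : rot i d.1 = d.1 ∧ rotInv i d.1 = d.1 := by
  obtain ⟨⟨a, b, c3⟩, hp⟩ := d
  have h2 : zeroCount (a, b, c3) = 2 := hd
  unfold zeroCount at h2
  simp only at h2
  cases i
  · have ha : a.isZeroB = false := isZeroB_of_ne_false hne
    by_cases hb : b.isZeroB = true <;> by_cases hc : c3.isZeroB = true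
    · have hb' := isZeroB_eq_zero hb
      have hc' := isZeroB_eq_zero hc
      subst hb'; subst hc'
      constructor <;> rfl
    · exfalso; simp [ha, hb, hc] at h2
    · exfalso; simp [ha, hb, hc] at h2
    · exfalso; simp [ha, hb, hc] at h2
  · have hb : b.isZeroB = false := isZeroB_of_ne_false hne
    by_cases ha : a.isZeroB = true <;> by_cases hc : c3.isZeroB = true
    · have ha' := isZeroB_eq_zero ha
      have hc' := isZeroB_eq_zero hc
      subst ha'; subst hc'
      constructor <;> rfl
    · exfalso; simp [ha, hb, hc] at h2
    · exfalso; simp [ha, hb, hc] at h2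
    · exfalso; simp [ha, hb, hc] at h2
  · have hc : c3.isZeroB = false := isZeroB_of_ne_false hne
    by_cases ha : a.isZeroB = true <;> by_cases hb : b.isZeroB = true
    · have ha' := isZeroB_eq_zero ha
      have hb' := isZeroB_eq_zero hb
      subst ha'; subst hb'
      constructor <;> rfl
    · exfalso; simp [ha, hb, hc] at h2
    · exfalso; simp [ha, hb, hc] at h2
    · exfalso; simp [ha, hb, hc] at h2

end InfRubik
namespace InfRubik

variable {L : Type u}

/-! #### Finiteness of the set of center cells -/

theorem center_coords_mem (d : Cell L) (hd : IsCenter d) :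
    d.1 ∈ PSet ({ExtCoord.zero, ExtCoord.negInf, ExtCoord.posInf} : Set (ExtCoord L)) := by
  obtain ⟨⟨a, b, c3⟩, hp⟩ := d
  have h2 : zeroCount (a, b, c3) = 2 := hd
  have h1 : infCount (a, b, c3) = 1 := hp
  show (a, b, c3) ∈ PSet _
  clear hd hp
  cases a <;> cases b <;> cases c3 <;>
    simp_all [zeroCount, infCount, ExtCoord.isZeroB, ExtCoord.isInfB, PSet]

theorem center_finite : {d : Cell L | IsCenter d}.Finite := by
  have hAfin : ({ExtCoord.zero, ExtCoord.negInf, ExtCoord.posInf} :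
      Set (ExtCoord L)).Finite :=
    ((Set.finite_singleton _).insert _).insert _
  exact (cell_PSet_finite hAfin).subset fun d hd => center_coords_mem d hd

/-! #### Basic twists act on the center cluster as global rotations -/

theorem quarterTurn_center (i : Axis) (α : ExtCoord L) :
    ∃ ρ ∈ rotGroup L, ∀ d : Cell L, IsCenter d →
      quarterTurn i α d = ρ d ∧ (quarterTurn i α)⁻¹ d = ρ⁻¹ d := by
  by_cases hα : α = ExtCoord.zero
  · subst hα
    refine ⟨rotAllPerm i, Subgroup.subset_closure ⟨i, rfl⟩, fun d hd => ?_⟩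
    constructor
    · apply Subtype.ext
      show qtTriple i ExtCoord.zero d.1 = rot i d.1
      unfold qtTriple
      split
      · rfl
      · next h => exact ((center_fix d hd i h).1).symm
    · apply Subtype.ext
      show qtTripleInv i ExtCoord.zero d.1 = rotInv i d.1
      unfold qtTripleInv
      split
      · rfl
      · next h => exact ((center_fix d hd i h).2).symm
  · refine ⟨1, one_mem _, fun d hd => ?_⟩
    constructor
    · apply Subtype.ext
      show qtTriple i α d.1 = d.1
      unfold qtTriple
      split
      · next h => exact (center_fix d hd i (fun hz => hα (h.symm.trans hz))).1
      · rfl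
    · apply Subtype.ext
      show qtTripleInv i α d.1 = ((1 : Equiv.Perm (Cell L))⁻¹ d).1
      have h1 : ((1 : Equiv.Perm (Cell L))⁻¹ d).1 = d.1 := by simp
      rw [h1]
      unfold qtTripleInv
      split
      · next h => exact (center_fix d hd i (fun hz => hα (h.symm.trans hz))).2
      · rfl

theorem basic_center {π : Equiv.Perm (Cell L)} (hπ : IsBasic L π) :
    ∃ ρ ∈ rotGroup L, ∀ d : Cell L, IsCenter d → π⁻¹ d = ρ d := by
  obtain ⟨i, α, hcase⟩ := hπ
  obtain ⟨ρ0, hρ0, hfix⟩ := quarterTurn_center i α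
  rcases hcase with rfl | rfl | rfl
  · exact ⟨ρ0⁻¹, inv_mem hρ0, fun d hd => (hfix d hd).2⟩
  · refine ⟨ρ0⁻¹ * ρ0⁻¹, mul_mem (inv_mem hρ0) (inv_mem hρ0), fun d hd => ?_⟩
    have h1 : (quarterTurn i α ^ 2)⁻¹ d = (quarterTurn i α)⁻¹ ((quarterTurn i α)⁻¹ d) := by
      rw [pow_two, mul_inv_rev]; rfl
    rw [h1, (hfix d hd).2]
    have hd2 : IsCenter (ρ0⁻¹ d) := (rotGroup_center hρ0 d hd).2
    rw [(hfix _ hd2).2]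
    rfl
  · exact ⟨ρ0, hρ0, fun d hd => by rw [inv_inv]; exact (hfix d hd).1⟩

/-! #### The center cluster along a convergent sequence -/

theorem center_run (s : BasicSeq L) (f0 : Cell L → Option Color) (hconv : s.ConvOver f0) :
    ∀ θ, θ ≤ s.len → ∃ h ∈ rotGroup L, ∀ d : Cell L, IsCenter d →
      run s.seq f0 θ d = f0 (h⁻¹ d) := by
  intro θ
  induction θ using Ordinal.induction with
  | h θ IH =>
    intro hθ
    rcases Ordinal.zero_or_succ_or_isSuccLimit θ with rfl | ⟨η, rfl⟩ | hlim
    · refine ⟨1, one_mem _, fun d hd => ?_⟩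
      rw [run_zero]
      simp
    · have hηlen : η < s.len := lt_of_lt_of_le (Order.lt_succ η) hθ
      obtain ⟨h, hh, hrun⟩ := IH η (Order.lt_succ η) hηlen.le
      obtain ⟨ρ, hρ, hfix⟩ := basic_center (s.basic η hηlen)
      refine ⟨ρ⁻¹ * h, mul_mem (inv_mem hρ) hh, fun d hd => ?_⟩
      rw [run_succ, hfix d hd, hrun (ρ d) (rotGroup_center hρ d hd).1]
      congr 1
    · have hle : ∀ d ∈ {d : Cell L | IsCenter d}, run s.seq f0 θ d ≠ none :=
        fun d _ => legal_stages s f0 hconv θ hθ d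
      obtain ⟨Γ, hΓ, hst⟩ := limit_stab s.seq f0 hlim _ center_finite hle
      obtain ⟨h, hh, hrun⟩ := IH Γ hΓ (le_of_lt (lt_of_lt_of_le hΓ hθ))
      exact ⟨h, hh, fun d hd => by rw [← hst Γ le_rfl hΓ d hd, hrun d hd]⟩

/-! #### Standard configurations are exactly preserved -/

theorem standard_terminal_iff (s : BasicSeq L) (f0 : Cell L → Option Color)
    (hconv : s.ConvOver f0) : Standard (s.terminal f0) ↔ Standard f0 := by
  obtain ⟨h, hh, hcen⟩ := center_run s f0 hconv s.len le_rfl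
  constructor
  · rintro ⟨hcount, g, hg, hsol⟩
    refine ⟨fun c hc γ => by rw [← terminal_count s f0 hconv c γ]; exact hcount c hc γ, ?_⟩
    refine ⟨h⁻¹ * g, mul_mem (inv_mem hh) hg, fun d hd => ?_⟩
    have h1 : f0 d = s.terminal f0 (h d) := by
      rw [show s.terminal f0 (h d) = run s.seq f0 s.len (h d) from rfl,
        hcen (h d) (rotGroup_center hh d hd).1, Equiv.Perm.inv_def, Equiv.symm_apply_apply]
    rw [h1, hsol (h d) (rotGroup_center hh d hd).1]
    congr 1
  · rintro ⟨hcount, g, hg, hsol⟩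
    refine ⟨fun c hc γ => by rw [terminal_count s f0 hconv c γ]; exact hcount c hc γ, ?_⟩
    refine ⟨h * g, mul_mem hh hg, fun d hd => ?_⟩
    rw [show s.terminal f0 d = run s.seq f0 s.len d from rfl, hcen d hd,
      hsol (h⁻¹ d) (rotGroup_center hh d hd).2]
    congr 1

end InfRubik
open InfRubik in
/-- For the countable edgeless cube, no legal configuration outside the set of standard
configurations is connected to a standard configuration by accessibility, in either
direction. -/
theorem nonstandard_disconnected {L : Type u} [Countable L] [Infinite L]
    (f g : Cell L → Option Color) (hf : Standard f) (hg : IsLegal g)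
    (hgn : ¬ Standard g) :
    ¬ Accessible (IsBasic L) f g ∧ ¬ Accessible (IsBasic L) g f := by
  constructor
  · rintro ⟨s, hconv, hterm⟩
    exact hgn (hterm ▸ (standard_terminal_iff s f hconv).mpr hf)
  · rintro ⟨s, hconv, hterm⟩
    have hf' : Standard (s.terminal g) := hterm.symm ▸ hf
    exact hgn ((standard_terminal_iff s g hconv).mp hf')
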